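/- Let P ⊆ ℝ² be a finite set in which all pairwise distances between distinct points are distinct, and let Q ⊆ P be a nonempty subset with either Q = P or dist(Q, P \ Q) > diam(Q). Then for every Euclidean minimum spanning tree T of P, the subgraph of T induced on Q is connected (so it is a spanning tree of Q). -/

import Mathlib

/-!
Exchange argument (the cut property of minimum spanning trees). If `a, b ∈ Q` were not joined
inside `Q`, the tree path from `a` to `b` would use an edge `xy` with `x ∈ Q`, `y ∉ Q`. Removing
`xy` separates `a` from `b`, so adding `ab` instead gives another connected graph, and it is
strictly shorter because `|ab| ≤ diam Q < dist(Q, P \ Q) ≤ |xy|`.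
-/

/-- The distance between two sets of points: the infimum of pairwise distances. -/
noncomputable def setDist (U V : Set (EuclideanSpace ℝ (Fin 2))) : ℝ :=
  sInf (Set.image2 dist U V)

/-- The total edge length of a graph on a finite planar point set. -/
noncomputable def totalLength {P : Finset (EuclideanSpace ℝ (Fin 2))}
    (G : SimpleGraph ↥P) : ℝ :=
  ∑ᶠ e ∈ G.edgeSet,
    Sym2.lift ⟨fun (p q : ↥P) =>
      dist (p : EuclideanSpace ℝ (Fin 2)) (q : EuclideanSpace ℝ (Fin 2)),
      fun _ _ => dist_comm _ _⟩ e

/-- `T` is a Euclidean minimum spanning tree of `P`: a connected acyclic graph on vertex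
set `P` whose total edge length is minimal among all connected graphs on vertex set `P`. -/
def IsEMST (P : Finset (EuclideanSpace ℝ (Fin 2))) (T : SimpleGraph ↥P) : Prop :=
  T.Connected ∧ T.IsAcyclic ∧
    ∀ G : SimpleGraph ↥P, G.Connected → totalLength T ≤ totalLength G

namespace SimpleGraph

variable {V : Type*} {G : SimpleGraph V}

lemma Walk.reachable_induce_or_exists_leaving_edge {S : Set V} {a b : V} (p : G.Walk a b)
    (ha : a ∈ S) (hb : b ∈ S) :
    (G.induce S).Reachable ⟨a, ha⟩ ⟨b, hb⟩ ∨ ∃ x ∈ S, ∃ y ∉ S, s(x, y) ∈ p.edges := by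
  induction p with
  | nil => exact Or.inl .rfl
  | @cons a c b hac p ih =>
    by_cases hc : c ∈ S
    · refine (ih hc hb).imp (fun hcb => .trans ?_ hcb) ?_
      · exact Adj.reachable (by simpa using hac)
      · rintro ⟨x, hx, y, hy, hxy⟩
        exact ⟨x, hx, y, hy, by simp [hxy]⟩
    · exact Or.inr ⟨a, ha, c, hc, by simp⟩

lemma IsAcyclic.not_reachable_deleteEdges_of_mem_edges (hG : G.IsAcyclic) {a b x y : V}
    {p : G.Walk a b} (hp : p.IsPath) (hxy : s(x, y) ∈ p.edges) :
    ¬ (G.deleteEdges {s(x, y)}).Reachable a b := by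
  classical
  rw [reachable_deleteEdges_iff_exists_walk]
  rintro ⟨q, hq⟩
  have hpq : (⟨p, hp⟩ : G.Path a b) = q.toPath := (hG.subsingleton_path a b).elim _ _
  exact hq (q.edges_toPath_subset_edges (by rwa [← hpq]))

lemma Reachable.reachable_deleteEdges_or {v w : V} (h : G.Reachable v w) (x y : V) :
    (G.deleteEdges {s(x, y)}).Reachable v w ∨ (G.deleteEdges {s(x, y)}).Reachable v x ∨
      (G.deleteEdges {s(x, y)}).Reachable v y := by
  obtain ⟨p⟩ := h
  induction p with
  | nil => exact Or.inl .rfl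
  | @cons v c w hvc p ih =>
    by_cases he : s(v, c) = s(x, y)
    · rcases Sym2.eq_iff.mp he with ⟨rfl, -⟩ | ⟨rfl, -⟩
      · exact Or.inr (Or.inl .rfl)
      · exact Or.inr (Or.inr .rfl)
    · have hvc' : (G.deleteEdges {s(x, y)}).Reachable v c := Adj.reachable (by simp [hvc, he])
      exact ih.imp hvc'.trans (Or.imp hvc'.trans hvc'.trans)

lemma Connected.connected_deleteEdges_sup_edge (hG : G.Connected) {x y a b : V}
    (hab : ¬ (G.deleteEdges {s(x, y)}).Reachable a b) :
    (G.deleteEdges {s(x, y)} ⊔ edge a b).Connected := by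
  set G' := G.deleteEdges {s(x, y)}
  have hle : G' ≤ G' ⊔ edge a b := le_sup_left
  have hside : ∀ v, G'.Reachable v x ∨ G'.Reachable v y := fun v =>
    ((hG v x).reachable_deleteEdges_or x y).elim Or.inl id
  have hxy : (G' ⊔ edge a b).Reachable x y := by
    have hab' : (G' ⊔ edge a b).Reachable a b :=
      Adj.reachable (Or.inr ((edge_adj ..).2 ⟨Or.inl ⟨rfl, rfl⟩, fun h => hab (h ▸ .rfl)⟩))
    rcases hside a with hax | hay <;> rcases hside b with hbx | hby
    · exact absurd (hax.trans hbx.symm) hab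
    · exact (hax.symm.mono hle).trans (hab'.trans (hby.mono hle))
    · exact (hbx.symm.mono hle).trans (hab'.symm.trans (hay.mono hle))
    · exact absurd (hay.trans hby.symm) hab
  refine (connected_iff_exists_forall_reachable _).2 ⟨x, fun v => ?_⟩
  rcases hside v with hvx | hvy
  · exact (hvx.mono hle).symm
  · exact hxy.trans (hvy.mono hle).symm

lemma finsum_edgeSet_deleteEdges_sup_edge_add {M : Type*} [AddCommMonoid M] [Finite V]
    (ℓ : Sym2 V → M) {x y a b : V} (hxy : G.Adj x y) (hab : ¬ G.Adj a b) (hne : a ≠ b) :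
    (∑ᶠ e ∈ (G.deleteEdges {s(x, y)} ⊔ edge a b).edgeSet, ℓ e) + ℓ s(x, y) =
      (∑ᶠ e ∈ G.edgeSet, ℓ e) + ℓ s(a, b) := by
  have hedges : (G.deleteEdges {s(x, y)} ⊔ edge a b).edgeSet =
      insert s(a, b) (G.edgeSet \ {s(x, y)}) := by
    rw [edgeSet_sup, edgeSet_deleteEdges, edgeSet_edge_of_ne hne, Set.union_comm,
      Set.singleton_union]
  have hnotin : s(a, b) ∉ G.edgeSet \ {s(x, y)} := fun h => hab h.1
  have hxy' : {s(x, y)} ⊆ G.edgeSet := Set.singleton_subset_iff.2 hxy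
  rw [hedges, finsum_mem_insert _ hnotin (Set.toFinite _),
    ← finsum_mem_add_sdiff hxy' (Set.toFinite _), finsum_mem_singleton]
  abel

def IsMinWeightSpanningTree (ℓ : Sym2 V → ℝ) (T : SimpleGraph V) : Prop :=
  T.Connected ∧ T.IsAcyclic ∧
    ∀ G : SimpleGraph V, G.Connected → ∑ᶠ e ∈ T.edgeSet, ℓ e ≤ ∑ᶠ e ∈ G.edgeSet, ℓ e

theorem IsMinWeightSpanningTree.connected_induce [Finite V] {ℓ : Sym2 V → ℝ}
    {T : SimpleGraph V} (hT : IsMinWeightSpanningTree ℓ T) {S : Set V} (hS : S.Nonempty)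
    (hℓ : ∀ a ∈ S, ∀ b ∈ S, ∀ x ∈ S, ∀ y ∉ S, ℓ s(a, b) < ℓ s(x, y)) :
    (T.induce S).Connected := by
  have : Nonempty S := hS.to_subtype
  refine (connected_iff _).2 ⟨fun a b => ?_, inferInstance⟩
  by_contra hab
  obtain ⟨p, hp⟩ := hT.1.exists_isPath a b
  obtain ⟨x, hx, y, hy, hxy⟩ :=
    (p.reachable_induce_or_exists_leaving_edge a.2 b.2).resolve_left hab
  have hsep := hT.2.1.not_reachable_deleteEdges_of_mem_edges hp hxy
  have hexchange := hT.2.2 _ (hT.1.connected_deleteEdges_sup_edge hsep)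
  have hlength := finsum_edgeSet_deleteEdges_sup_edge_add ℓ (p.adj_of_mem_edges hxy)
    (fun h => hab (Adj.reachable (by simpa using h))) (fun h => hab (by simp [Subtype.ext h]))
  linarith [hℓ a a.2 b b.2 x hx y hy]

end SimpleGraph

lemma setDist_le_dist {U V : Set (EuclideanSpace ℝ (Fin 2))} {p q : EuclideanSpace ℝ (Fin 2)}
    (hp : p ∈ U) (hq : q ∈ V) : setDist U V ≤ dist p q :=
  csInf_le ⟨0, by rintro _ ⟨_, -, _, -, rfl⟩; exact dist_nonneg⟩ (Set.mem_image2_of_mem hp hq)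

theorem emst_induced_on_cluster_connected_general (P : Finset (EuclideanSpace ℝ (Fin 2)))
    (Q : Finset (EuclideanSpace ℝ (Fin 2))) (hQP : Q ⊆ P) (hQne : Q.Nonempty)
    (hQ : Q = P ∨
      Metric.diam (Q : Set (EuclideanSpace ℝ (Fin 2)))
        < setDist ↑Q ((↑P : Set (EuclideanSpace ℝ (Fin 2))) \ ↑Q))
    (T : SimpleGraph ↥P) (hT : IsEMST P T) :
    (T.induce {x : ↥P | (x : EuclideanSpace ℝ (Fin 2)) ∈ Q}).Connected := by
  obtain ⟨q, hq⟩ := hQne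
  refine SimpleGraph.IsMinWeightSpanningTree.connected_induce (ℓ := Sym2.lift
    ⟨fun p q : ↥P => dist (p : EuclideanSpace ℝ (Fin 2)) q, fun _ _ => dist_comm _ _⟩)
    hT ⟨⟨q, hQP hq⟩, hq⟩ ?_
  intro a ha b hb x hx y hy
  rcases hQ with rfl | hQ
  · exact absurd y.2 hy
  · calc dist (a : EuclideanSpace ℝ (Fin 2)) b ≤ Metric.diam (Q : Set _) :=
          Metric.dist_le_diam_of_mem Q.finite_toSet.isBounded ha hb
      _ < _ := hQ
      _ ≤ dist (x : EuclideanSpace ℝ (Fin 2)) y := setDist_le_dist hx ⟨y.2, hy⟩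

/-- Let `P ⊆ ℝ²` be a finite set in which all pairwise distances between distinct points
are distinct, and let `Q ⊆ P` be a nonempty subset with either `Q = P` or
`dist(Q, P \ Q) > diam(Q)`. Then for every Euclidean minimum spanning tree `T` of `P`,
the subgraph of `T` induced on `Q` is connected. -/
theorem emst_induced_on_cluster_connected (P : Finset (EuclideanSpace ℝ (Fin 2)))
    (hdist : ∀ p ∈ P, ∀ q ∈ P, ∀ r ∈ P, ∀ s ∈ P,
      p ≠ q → r ≠ s → dist p q = dist r s →
        ({p, q} : Set (EuclideanSpace ℝ (Fin 2))) = {r, s})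
    (Q : Finset (EuclideanSpace ℝ (Fin 2))) (hQP : Q ⊆ P) (hQne : Q.Nonempty)
    (hQ : Q = P ∨
      Metric.diam (Q : Set (EuclideanSpace ℝ (Fin 2)))
        < setDist ↑Q ((↑P : Set (EuclideanSpace ℝ (Fin 2))) \ ↑Q))
    (T : SimpleGraph ↥P) (hT : IsEMST P T) :
    (T.induce {x : ↥P | (x : EuclideanSpace ℝ (Fin 2)) ∈ Q}).Connected :=
  emst_induced_on_cluster_connected_general P Q hQP hQne hQ T hT
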